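/- Let d ≥ 2, r > 0 and f ∈ 𝒜'_d(r). Then the linear operator g ↦ Df·g on 𝒜_d(r), given by the pointwise application of the Jacobian matrix of f, i.e. (Df·g)(θ) = Df(θ)g(θ), is bounded with operator norm at most ‖f‖'_r. -/

import Mathlib

/-!
Writing `f(θ) = ∑ₖ fₖ e^{2πi k·θ}`, the Jacobian is `Df(θ) = ∑ₖ e^{2πi k·θ} Jₖ` with
`Jₖ v = 2πi (k·v) fₖ`, and `‖Jₖ‖ ≤ 2π‖k‖ ‖fₖ‖`; termwise differentiation on `D(r)` is
legitimate because `|e^{2πi k·θ}| ≤ e^{r‖k‖}` there, so the derivatives are dominated by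
`(1 + 2π‖k‖) e^{r‖k‖} ‖fₖ‖`. Multiplying out, `Df·g` has Fourier coefficients
`hₘ = ∑ₖ Jₖ g_{m-k}`, and submultiplicativity of `e^{r‖·‖}` gives
`‖h‖_r ≤ ∑ₖ,ₗ 2π‖k‖ e^{r‖k‖} ‖fₖ‖ · e^{r‖l‖} ‖gₗ‖ ≤ ‖f‖'_r ‖g‖_r`.
-/

open scoped BigOperators ENNReal Classical
open Complex

noncomputable section

namespace Renorm

/-- ℓ¹ norm of an integer frequency vector. -/
def nZ {d : ℕ} (k : Fin d → ℤ) : ℝ := ∑ i, |(k i : ℝ)|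

/-- `ℂ^m` with the ℓ¹ norm. -/
abbrev V (m : ℕ) : Type := PiLp 1 (fun _ : Fin m => ℂ)

/-- The Banach space underlying `𝒜_d(r)` (and `𝒜'_d(r)`):  an element stores, at
index `k ∈ ℤ^d`, the Fourier coefficient multiplied by the corresponding weight,
so that the `lp`-norm coincides with the norm `‖·‖_r` (resp. `‖·‖'_r`). -/
abbrev AA (d m : ℕ) : Type := lp (fun _ : (Fin d → ℤ) => V m) 1

/-- weight of the norm of `𝒜_d(r)` -/
def w {d : ℕ} (r : ℝ) (k : Fin d → ℤ) : ℝ := Real.exp (r * nZ k)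

/-- weight of the norm of `𝒜'_d(r)` -/
def w' {d : ℕ} (r : ℝ) (k : Fin d → ℤ) : ℝ := (1 + 2 * Real.pi * nZ k) * Real.exp (r * nZ k)

/-- Fourier coefficient of `a` regarded as an element of `𝒜_d(r)`. -/
def coeffA {d m : ℕ} (r : ℝ) (a : AA d m) (k : Fin d → ℤ) : V m := (w r k)⁻¹ • a k

/-- Fourier coefficient of `a` regarded as an element of `𝒜'_d(r)`. -/
def coeffA' {d m : ℕ} (r : ℝ) (a : AA d m) (k : Fin d → ℤ) : V m := (w' r k)⁻¹ • a k

/-- `k · θ` -/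
def kdot {d : ℕ} (k : Fin d → ℤ) (θ : V d) : ℂ := ∑ i, (k i : ℂ) * θ i

/-- the Fourier character `e^{2πi k·θ}` -/
def e2 {d : ℕ} (k : Fin d → ℤ) (θ : V d) : ℂ := Complex.exp (2 * Real.pi * Complex.I * kdot k θ)

/-- the function represented by `a`, regarded as an element of `𝒜_d(r)` -/
def funA {d m : ℕ} (r : ℝ) (a : AA d m) (θ : V d) : V m := ∑' k, e2 k θ • coeffA r a k

/-- the function represented by `a`, regarded as an element of `𝒜'_d(r)` -/
def funA' {d m : ℕ} (r : ℝ) (a : AA d m) (θ : V d) : V m := ∑' k, e2 k θ • coeffA' r a k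

/-- the complex domain `D(r)` -/
def Dom (d : ℕ) (r : ℝ) : Set (V d) := {θ | (∑ i, |(θ i).im|) < r / (2 * Real.pi)}

/-- the norm `‖·‖_s` of a family of Fourier coefficients -/
def normA {d m : ℕ} (s : ℝ) (c : (Fin d → ℤ) → V m) : ℝ := ∑' k, ‖c k‖ * w s k

/-- the norm `‖·‖'_s` of a family of Fourier coefficients -/
def normA' {d m : ℕ} (s : ℝ) (c : (Fin d → ℤ) → V m) : ℝ := ∑' k, ‖c k‖ * w' s k

/-- the set `I_σ⁻(ω)` of far from resonance indices -/
def Iminus {d : ℕ} (σ : ℝ) (ω : V d) : Set (Fin d → ℤ) :=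
  {k | σ * nZ k < ‖(∑ i, ω i * (k i : ℂ))‖}

/-- the constant vector field `c` as an element of `𝒜_d(r)` / `𝒜'_d(r)`
(both weights are `1` at `k = 0`). -/
def const {d m : ℕ} (c : V m) : AA d m := lp.single 1 (0 : Fin d → ℤ) c

/-- the subspace of `𝒜_d` / `𝒜'_d` of vector fields with Fourier modes supported in `S` -/
def SubOn (d m : ℕ) (S : Set (Fin d → ℤ)) : Submodule ℂ (AA d m) where
  carrier := {a | ∀ k ∉ S, a k = 0}
  add_mem' := by
    intro a b ha hb k hk
    rw [lp.coeFn_add, Pi.add_apply, ha k hk, hb k hk, add_zero]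
  zero_mem' := by
    intro k _
    rw [lp.coeFn_zero, Pi.zero_apply]
  smul_mem' := by
    intro c a ha k hk
    rw [lp.coeFn_smul, Pi.smul_apply, ha k hk, smul_zero]

/-- real vector as a complex one -/
def toC {d : ℕ} (ω : Fin d → ℝ) : V d := WithLp.toLp 1 (fun i => (ω i : ℂ))

section Antidiagonal

variable {G E : Type*} [AddCommGroup G]

def addAntidiagonalEquiv (G : Type*) [AddCommGroup G] : G × G ≃ G × G where
  toFun p := (p.1 + p.2, p.1)
  invFun q := (q.2, q.1 - q.2)
  left_inv p := by ext <;> simp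
  right_inv q := by ext <;> simp

lemma _root_.Summable.comp_antidiagonal [AddCommMonoid E] [TopologicalSpace E] {F : G × G → E}
    (hF : Summable F) :
    Summable fun q : G × G => F (q.2, q.1 - q.2) :=
  (addAntidiagonalEquiv G).symm.summable_iff.2 hF

lemma _root_.Summable.tsum_tsum_antidiagonal [AddCommGroup E] [UniformSpace E]
    [IsUniformAddGroup E] [CompleteSpace E] [T0Space E] {F : G × G → E} (hF : Summable F) :
    ∑' m, ∑' k, F (k, m - k) = ∑' p, F p := by
  rw [← hF.comp_antidiagonal.tsum_prod]
  exact (addAntidiagonalEquiv G).symm.tsum_eq F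

end Antidiagonal

section Weights

variable {d : ℕ}

lemma nZ_nonneg (k : Fin d → ℤ) : 0 ≤ nZ k :=
  Finset.sum_nonneg fun _ _ => abs_nonneg _

lemma nZ_add_le (k l : Fin d → ℤ) : nZ (k + l) ≤ nZ k + nZ l := by
  rw [nZ, nZ, nZ, ← Finset.sum_add_distrib]
  gcongr with i
  push_cast [Pi.add_apply]
  exact abs_add_le _ _

lemma abs_le_nZ (k : Fin d → ℤ) (i : Fin d) : |(k i : ℝ)| ≤ nZ k :=
  Finset.single_le_sum (f := fun j => |(k j : ℝ)|) (fun _ _ => abs_nonneg _) (Finset.mem_univ i)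

lemma w_pos (r : ℝ) (k : Fin d → ℤ) : 0 < w r k := Real.exp_pos _

lemma w'_pos (r : ℝ) (k : Fin d → ℤ) : 0 < w' r k :=
  mul_pos (by have := nZ_nonneg k; positivity) (Real.exp_pos _)

lemma w_add_le_mul {r : ℝ} (hr : 0 ≤ r) (k l : Fin d → ℤ) : w r (k + l) ≤ w r k * w r l := by
  rw [w, w, w, ← Real.exp_add, ← mul_add]
  gcongr
  exact nZ_add_le k l

lemma w_le_w' (r : ℝ) (k : Fin d → ℤ) : w r k ≤ w' r k := by
  rw [w, w']
  have := mul_nonneg (mul_nonneg Real.two_pi_pos.le (nZ_nonneg k)) (Real.exp_pos (r * nZ k)).le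
  nlinarith

lemma w_mul_le_w' (r : ℝ) (k : Fin d → ℤ) : w r k * (2 * Real.pi * nZ k) ≤ w' r k := by
  rw [w, w']
  nlinarith [Real.exp_pos (r * nZ k)]

end Weights

section Coefficients

variable {d m : ℕ} {r : ℝ}

lemma summable_norm (a : AA d m) : Summable fun k => ‖a k‖ := by
  simpa using (lp.memℓp a).summable (by norm_num : 0 < (1 : ℝ≥0∞).toReal)

lemma norm_eq_tsum_norm (a : AA d m) : ‖a‖ = ∑' k, ‖a k‖ := by
  simpa using lp.norm_eq_tsum_rpow (p := 1) (by norm_num) a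

lemma norm_coeffA_mul_w (r : ℝ) (a : AA d m) (k : Fin d → ℤ) :
    ‖coeffA r a k‖ * w r k = ‖a k‖ := by
  rw [coeffA, norm_smul, Real.norm_eq_abs, abs_of_pos (inv_pos.2 (w_pos r k)),
    mul_comm, ← mul_assoc, mul_inv_cancel₀ (w_pos r k).ne', one_mul]

lemma norm_coeffA'_mul_w' (r : ℝ) (a : AA d m) (k : Fin d → ℤ) :
    ‖coeffA' r a k‖ * w' r k = ‖a k‖ := by
  rw [coeffA', norm_smul, Real.norm_eq_abs, abs_of_pos (inv_pos.2 (w'_pos r k)),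
    mul_comm, ← mul_assoc, mul_inv_cancel₀ (w'_pos r k).ne', one_mul]

lemma summable_norm_coeffA_mul_w (r : ℝ) (a : AA d m) :
    Summable fun k => ‖coeffA r a k‖ * w r k := by
  simpa only [norm_coeffA_mul_w] using summable_norm a

lemma summable_norm_coeffA'_mul_w (r : ℝ) (a : AA d m) :
    Summable fun k => ‖coeffA' r a k‖ * w r k := by
  refine (summable_norm a).of_nonneg_of_le (fun k => by have := w_pos r k; positivity)
    fun k => ?_
  rw [← norm_coeffA'_mul_w' r a k]
  exact mul_le_mul_of_nonneg_left (w_le_w' r k) (norm_nonneg _)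

def ofCoeffA (r : ℝ) (c : (Fin d → ℤ) → V m) (hc : Summable fun k => ‖c k‖ * w r k) :
    AA d m :=
  ⟨fun k => w r k • c k, memℓp_gen <| by
    simpa [norm_smul, abs_of_pos (w_pos r _), mul_comm] using hc⟩

lemma coeffA_ofCoeffA (c : (Fin d → ℤ) → V m) (hc : Summable fun k => ‖c k‖ * w r k) :
    coeffA r (ofCoeffA r c hc) = c :=
  funext fun k => inv_smul_smul₀ (w_pos r k).ne' (c k)

lemma norm_ofCoeffA (c : (Fin d → ℤ) → V m) (hc : Summable fun k => ‖c k‖ * w r k) :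
    ‖ofCoeffA r c hc‖ = normA r c := by
  rw [norm_eq_tsum_norm, normA]
  congr 1 with k
  rw [← norm_coeffA_mul_w, coeffA_ofCoeffA]

end Coefficients

section Characters

variable {d m : ℕ}

lemma norm_kdot_le (k : Fin d → ℤ) (v : V d) : ‖kdot k v‖ ≤ nZ k * ‖v‖ := by
  rw [kdot, PiLp.norm_eq_of_L1, Finset.mul_sum]
  refine (norm_sum_le _ _).trans (Finset.sum_le_sum fun i _ => ?_)
  rw [norm_mul, Complex.norm_intCast]
  exact mul_le_mul_of_nonneg_right (abs_le_nZ k i) (norm_nonneg _)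

def kdotCLM (k : Fin d → ℤ) : V d →L[ℂ] ℂ :=
  LinearMap.mkContinuous
    { toFun := kdot k
      map_add' := fun x y => by
        simp only [kdot, PiLp.add_apply, mul_add, Finset.sum_add_distrib]
      map_smul' := fun c x => by
        simp only [kdot, PiLp.smul_apply, smul_eq_mul, RingHom.id_apply, Finset.mul_sum]
        exact Finset.sum_congr rfl fun i _ => by ring }
    (nZ k) (norm_kdot_le k)

@[simp] lemma kdotCLM_apply (k : Fin d → ℤ) (v : V d) : kdotCLM k v = kdot k v := rfl

lemma norm_kdotCLM_le (k : Fin d → ℤ) : ‖kdotCLM k‖ ≤ nZ k :=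
  LinearMap.mkContinuous_norm_le _ (nZ_nonneg k) _

lemma e2_add (k l : Fin d → ℤ) (θ : V d) : e2 (k + l) θ = e2 k θ * e2 l θ := by
  rw [e2, e2, e2, ← Complex.exp_add, kdot, kdot, kdot, ← mul_add, ← Finset.sum_add_distrib]
  push_cast [Pi.add_apply, add_mul]
  rfl

lemma norm_e2_le {r : ℝ} (k : Fin d → ℤ) {θ : V d} (hθ : θ ∈ Dom d r) : ‖e2 k θ‖ ≤ w r k := by
  have him : -(kdot k θ).im ≤ nZ k * (r / (2 * Real.pi)) := by
    calc -(kdot k θ).im ≤ |∑ i, (k i : ℝ) * (θ i).im| := by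
          simpa [kdot, Complex.im_sum] using neg_le_abs (kdot k θ).im
      _ ≤ nZ k * ∑ i, |(θ i).im| := by
          rw [Finset.mul_sum]
          refine (Finset.abs_sum_le_sum_abs _ _).trans (Finset.sum_le_sum fun i _ => ?_)
          rw [abs_mul]
          exact mul_le_mul_of_nonneg_right (abs_le_nZ k i) (abs_nonneg _)
      _ ≤ nZ k * (r / (2 * Real.pi)) := mul_le_mul_of_nonneg_left hθ.le (nZ_nonneg k)
  rw [e2, Complex.norm_exp, w]
  gcongr
  simp only [Complex.mul_re, Complex.mul_im, Complex.I_re, Complex.I_im, Complex.ofReal_re,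
    Complex.ofReal_im, Complex.re_ofNat, Complex.im_ofNat]
  have hπ := Real.pi_pos
  calc _ = 2 * Real.pi * -(kdot k θ).im := by ring
    _ ≤ 2 * Real.pi * (nZ k * (r / (2 * Real.pi))) := by gcongr
    _ = r * nZ k := by field_simp

lemma summable_e2_smul {r : ℝ} {c : (Fin d → ℤ) → V m} (hc : Summable fun k => ‖c k‖ * w r k)
    {θ : V d} (hθ : θ ∈ Dom d r) : Summable fun k => e2 k θ • c k :=
  hc.of_norm_bounded fun k => by
    rw [norm_smul, mul_comm]
    exact mul_le_mul_of_nonneg_left (norm_e2_le k hθ) (norm_nonneg _)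

end Characters

section Domain

variable {d : ℕ}

def imPart (d : ℕ) : V d →ₗ[ℝ] PiLp 1 (fun _ : Fin d => ℝ) where
  toFun θ := WithLp.toLp 1 fun i => (θ i).im
  map_add' x y := by ext i; simp
  map_smul' c x := by ext i; simp

lemma Dom_eq_preimage_ball (r : ℝ) :
    Dom d r = imPart d ⁻¹' Metric.ball 0 (r / (2 * Real.pi)) := by
  ext θ
  simp [Dom, PiLp.norm_eq_of_L1, imPart]

lemma isOpen_Dom (r : ℝ) : IsOpen (Dom d r) := by
  rw [Dom_eq_preimage_ball]
  exact Metric.isOpen_ball.preimage (imPart d).continuous_of_finiteDimensional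

lemma convex_Dom (r : ℝ) : Convex ℝ (Dom d r) := by
  rw [Dom_eq_preimage_ball]
  exact (convex_ball _ _).linear_preimage (imPart d)

end Domain

section Jacobian

variable {d m : ℕ} {r : ℝ}

def jacCoeff (r : ℝ) (a : AA d m) (k : Fin d → ℤ) : V d →L[ℂ] V m :=
  ((2 * Real.pi * Complex.I : ℂ) • kdotCLM k).smulRight (coeffA' r a k)

lemma w_mul_norm_jacCoeff_le (a : AA d m) (k : Fin d → ℤ) :
    w r k * ‖jacCoeff r a k‖ ≤ ‖a k‖ := by
  have h2πI : ‖(2 * Real.pi * Complex.I : ℂ)‖ = 2 * Real.pi := by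
    simp [abs_of_pos Real.pi_pos]
  rw [jacCoeff, ContinuousLinearMap.norm_smulRight_apply, norm_smul, h2πI,
    ← norm_coeffA'_mul_w' r a k]
  calc w r k * (2 * Real.pi * ‖kdotCLM k‖ * ‖coeffA' r a k‖)
      ≤ w r k * (2 * Real.pi * nZ k) * ‖coeffA' r a k‖ := by
        rw [← mul_assoc]
        gcongr
        · exact (w_pos r k).le
        · exact norm_kdotCLM_le k
    _ ≤ w' r k * ‖coeffA' r a k‖ := by
        gcongr
        exact w_mul_le_w' r k
    _ = ‖coeffA' r a k‖ * w' r k := mul_comm _ _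

lemma hasFDerivAt_e2_smul_coeffA' (a : AA d m) (k : Fin d → ℤ) (θ : V d) :
    HasFDerivAt (fun θ => e2 k θ • coeffA' r a k) (e2 k θ • jacCoeff r a k) θ := by
  have h := ((2 * Real.pi * Complex.I : ℂ) • kdotCLM k).hasFDerivAt.cexp.smul_const
    (coeffA' r a k) (x := θ)
  refine h.congr_fderiv ?_
  ext v
  simp [jacCoeff, e2, smul_smul, mul_assoc]

lemma norm_e2_smul_jacCoeff_le (a : AA d m) (k : Fin d → ℤ) {θ : V d} (hθ : θ ∈ Dom d r) :
    ‖e2 k θ • jacCoeff r a k‖ ≤ ‖a k‖ := by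
  rw [norm_smul]
  exact (mul_le_mul_of_nonneg_right (norm_e2_le k hθ) (norm_nonneg _)).trans
    (w_mul_norm_jacCoeff_le a k)

lemma hasFDerivAt_funA' (a : AA d m) {θ : V d} (hθ : θ ∈ Dom d r) :
    HasFDerivAt (funA' r a) (∑' k, e2 k θ • jacCoeff r a k) θ :=
  hasFDerivAt_tsum_of_isPreconnected (summable_norm a) (isOpen_Dom r)
    (convex_Dom r).isPreconnected (fun k θ _ => hasFDerivAt_e2_smul_coeffA' a k θ)
    (fun k _ hθ => norm_e2_smul_jacCoeff_le a k hθ) hθ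
    (summable_e2_smul (summable_norm_coeffA'_mul_w r a) hθ) hθ

end Jacobian

section Convolution

variable {d m : ℕ} {r : ℝ}

def jacConv (r : ℝ) (f : AA d m) (g : AA d d) (n : Fin d → ℤ) : V m :=
  ∑' k, jacCoeff r f k (coeffA r g (n - k))

lemma norm_jacCoeff_apply_mul_w_le (hr : 0 ≤ r) (f : AA d m) (g : AA d d) (k l : Fin d → ℤ) :
    ‖jacCoeff r f k (coeffA r g l)‖ * w r (k + l) ≤ ‖f k‖ * ‖g l‖ :=
  calc ‖jacCoeff r f k (coeffA r g l)‖ * w r (k + l)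
      ≤ ‖jacCoeff r f k‖ * ‖coeffA r g l‖ * (w r k * w r l) :=
        mul_le_mul ((jacCoeff r f k).le_opNorm _) (w_add_le_mul hr k l) (w_pos r _).le
          (by positivity)
    _ = (w r k * ‖jacCoeff r f k‖) * (‖coeffA r g l‖ * w r l) := by ring
    _ ≤ ‖f k‖ * ‖g l‖ := by
        rw [norm_coeffA_mul_w]
        gcongr
        exact w_mul_norm_jacCoeff_le f k

lemma summable_norm_jacCoeff_apply_mul_w (hr : 0 ≤ r) (f : AA d m) (g : AA d d) :
    Summable fun p : (Fin d → ℤ) × (Fin d → ℤ) =>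
      ‖jacCoeff r f p.1 (coeffA r g p.2)‖ * w r (p.1 + p.2) :=
  ((summable_norm f).mul_of_nonneg (summable_norm g) (fun _ => norm_nonneg _)
    (fun _ => norm_nonneg _)).of_nonneg_of_le
    (fun _ => mul_nonneg (norm_nonneg _) (w_pos r _).le)
    fun p => norm_jacCoeff_apply_mul_w_le hr f g p.1 p.2

lemma norm_jacConv_mul_w_le (hr : 0 ≤ r) (f : AA d m) (g : AA d d) (n : Fin d → ℤ) :
    ‖jacConv r f g n‖ * w r n
      ≤ ∑' k, ‖jacCoeff r f k (coeffA r g (n - k))‖ * w r (k + (n - k)) := by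
  have hrow := (summable_norm_jacCoeff_apply_mul_w hr f g).comp_antidiagonal.prod_factor n
  simp only [add_sub_cancel] at hrow ⊢
  rw [tsum_mul_right]
  exact mul_le_mul_of_nonneg_right
    (norm_tsum_le_tsum_norm ((summable_mul_right_iff (w_pos r n).ne').1 hrow)) (w_pos r n).le

lemma summable_jacConv (hr : 0 ≤ r) (f : AA d m) (g : AA d d) :
    Summable fun n => ‖jacConv r f g n‖ * w r n :=
  (summable_norm_jacCoeff_apply_mul_w hr f g).comp_antidiagonal.prod.of_nonneg_of_le
    (fun n => mul_nonneg (norm_nonneg _) (w_pos r n).le) (norm_jacConv_mul_w_le hr f g)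

lemma normA_jacConv_le (hr : 0 ≤ r) (f : AA d m) (g : AA d d) :
    normA r (jacConv r f g) ≤ ‖f‖ * ‖g‖ := by
  have hP := summable_norm_jacCoeff_apply_mul_w hr f g
  have hfg := (summable_norm f).mul_of_nonneg (summable_norm g) (fun _ => norm_nonneg _)
    (fun _ => norm_nonneg _)
  calc normA r (jacConv r f g)
      ≤ ∑' n, ∑' k, ‖jacCoeff r f k (coeffA r g (n - k))‖ * w r (k + (n - k)) :=
        (summable_jacConv hr f g).tsum_le_tsum (norm_jacConv_mul_w_le hr f g)
          hP.comp_antidiagonal.prod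
    _ = ∑' p : (Fin d → ℤ) × (Fin d → ℤ),
          ‖jacCoeff r f p.1 (coeffA r g p.2)‖ * w r (p.1 + p.2) :=
        hP.tsum_tsum_antidiagonal
    _ ≤ ∑' p : (Fin d → ℤ) × (Fin d → ℤ), ‖f p.1‖ * ‖g p.2‖ :=
        hP.tsum_le_tsum (fun p => norm_jacCoeff_apply_mul_w_le hr f g p.1 p.2) hfg
    _ = ‖f‖ * ‖g‖ := by
        rw [norm_eq_tsum_norm, norm_eq_tsum_norm,
          (summable_norm f).tsum_mul_tsum (summable_norm g) hfg]

lemma fderiv_funA'_apply_funA (hr : 0 ≤ r) (f : AA d m) (g : AA d d) {θ : V d}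
    (hθ : θ ∈ Dom d r) :
    fderiv ℂ (funA' r f) θ (funA r g θ) = ∑' n, e2 n θ • jacConv r f g n := by
  set E : (Fin d → ℤ) × (Fin d → ℤ) → V m :=
    fun p => e2 (p.1 + p.2) θ • jacCoeff r f p.1 (coeffA r g p.2) with hE_def
  have hE : Summable E :=
    (summable_norm_jacCoeff_apply_mul_w hr f g).of_norm_bounded fun p => by
      rw [hE_def, norm_smul, mul_comm]
      exact mul_le_mul_of_nonneg_left (norm_e2_le _ hθ) (norm_nonneg _)
  have hJ : Summable fun k => e2 k θ • jacCoeff r f k :=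
    (summable_norm f).of_norm_bounded fun k => norm_e2_smul_jacCoeff_le f k hθ
  have hrow (k : Fin d → ℤ) : e2 k θ • jacCoeff r f k (funA r g θ) = ∑' l, E (k, l) := by
    rw [funA, (jacCoeff r f k).map_tsum (summable_e2_smul (summable_norm_coeffA_mul_w r g) hθ),
      ← tsum_const_smul'']
    refine tsum_congr fun l => ?_
    simp only [hE_def, map_smul, smul_smul, e2_add]
  calc fderiv ℂ (funA' r f) θ (funA r g θ)
      = ∑' k, e2 k θ • jacCoeff r f k (funA r g θ) := by
        rw [(hasFDerivAt_funA' f hθ).fderiv,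
          ← ContinuousLinearMap.apply_apply (funA r g θ) (∑' k, _),
          (ContinuousLinearMap.apply ℂ (V m) (funA r g θ)).map_tsum hJ]
        rfl
    _ = ∑' p, E p := by rw [hE.tsum_prod]; exact tsum_congr hrow
    _ = ∑' n, e2 n θ • jacConv r f g n := by
        rw [← hE.tsum_tsum_antidiagonal]
        refine tsum_congr fun n => ?_
        rw [jacConv, ← tsum_const_smul'']
        simp only [hE_def, add_sub_cancel]

end Convolution

theorem statement14_general {d : ℕ} (r : ℝ) (hr : 0 < r) (f : AA d d) :
    ∀ g : AA d d, ∃ h : AA d d,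
      Set.EqOn (funA r h) (fun θ => fderiv ℂ (funA' r f) θ (funA r g θ)) (Dom d r) ∧
      ‖h‖ ≤ ‖f‖ * ‖g‖ := by
  intro g
  refine ⟨ofCoeffA r (jacConv r f g) (summable_jacConv hr.le f g), fun θ hθ => ?_, ?_⟩
  · dsimp only
    rw [fderiv_funA'_apply_funA hr.le f g hθ, funA, coeffA_ofCoeffA]
  · rw [norm_ofCoeffA]
    exact normA_jacConv_le hr.le f g

/-- for `f ∈ 𝒜'_d(r)`, the operator `g ↦ Df·g` on `𝒜_d(r)` is
bounded with operator norm at most `‖f‖'_r`. -/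
theorem statement14 {d : ℕ} (hd : 2 ≤ d) (r : ℝ) (hr : 0 < r) (f : AA d d) :
    ∀ g : AA d d, ∃ h : AA d d,
      Set.EqOn (funA r h) (fun θ => fderiv ℂ (funA' r f) θ (funA r g θ)) (Dom d r) ∧
      ‖h‖ ≤ ‖f‖ * ‖g‖ :=
  statement14_general r hr f

end Renorm
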